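/- Let N be a finite dimensional real vector space, let (A_n)_{n≥1} be a decreasing sequence of closed convex cones in N with A = ∩_n A_n, and let B ⊂ N be a convex cone. Suppose there is a linear functional ℓ on N with ℓ(x) > 0 for every nonzero x in the closed convex cone generated by A_1 ∪ B̄ (where B̄ denotes the closure of B). If v ∈ ∩_n (A_n + B), then v ∈ A + B̄. -/
import Mathlib


open Pointwise

/-- The smallest closed convex cone containing a set `s`. -/
def closedConeHull (N : Type*) [NormedAddCommGroup N] [NormedSpace ℝ N]
    (s : Set N) : Set N :=
  ⋂₀ {K : Set N | s ⊆ K ∧ IsClosed K ∧ Convex ℝ K ∧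
      ∀ x ∈ K, ∀ r : ℝ, 0 ≤ r → r • x ∈ K}

/-- Compactness argument in the relative dlt cone theorem: let `(A n)` be a
decreasing sequence of closed convex cones in a finite dimensional real vector
space `N`, with intersection `A`, and `B` a convex cone. If a linear functional
`ℓ` is strictly positive on the nonzero elements of the closed convex cone
generated by `A 1 ∪ closure B`, then any `v` lying in every `A n + B` lies in
`A + closure B`. -/
theorem stmt13
    (N : Type*) [NormedAddCommGroup N] [NormedSpace ℝ N] [FiniteDimensional ℝ N]
    (A : ℕ → Set N) (hAmono : ∀ n, A (n + 1) ⊆ A n)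
    (hAclosed : ∀ n, IsClosed (A n)) (hAconv : ∀ n, Convex ℝ (A n))
    (hAcone : ∀ n, ∀ x ∈ A n, ∀ r : ℝ, 0 ≤ r → r • x ∈ A n)
    (B : Set N) (hBconv : Convex ℝ B)
    (hBcone : ∀ x ∈ B, ∀ r : ℝ, 0 ≤ r → r • x ∈ B)
    (ℓ : N →ₗ[ℝ] ℝ)
    (hℓ : ∀ x ∈ closedConeHull N (A 1 ∪ closure B), x ≠ 0 → 0 < ℓ x)
    (v : N) (hv : ∀ n, v ∈ A n + B) :
    v ∈ (⋂ n, A n) + closure B := by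
  set K := closedConeHull N (A 1 ∪ closure B) with hKdef
  have hKclosed : IsClosed K := isClosed_sInter (fun T hT => hT.2.1)
  have hKsub : A 1 ∪ closure B ⊆ K := by
    intro x hx
    exact Set.mem_sInter.2 fun T hT => hT.1 hx
  have hKcone : ∀ x ∈ K, ∀ r : ℝ, 0 ≤ r → r • x ∈ K := by
    intro x hx r hr
    exact Set.mem_sInter.2 fun T hT => hT.2.2.2 x (Set.mem_sInter.1 hx T hT) r hr
  have hℓ0 : ∀ x ∈ K, 0 ≤ ℓ x := by
    intro x hx
    rcases eq_or_ne x 0 with h | h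
    · simp [h]
    · exact (hℓ x hx h).le
  have hℓcont : Continuous ℓ := ℓ.continuous_of_finiteDimensional
  -- strict positivity gives a lower bound `m * ‖x‖ ≤ ℓ x` on K
  obtain ⟨m, hm, hmK⟩ : ∃ m > (0:ℝ), ∀ x ∈ K, m * ‖x‖ ≤ ℓ x := by
    by_cases hS : (K ∩ Metric.sphere (0:N) 1).Nonempty
    · have hcpt : IsCompact (K ∩ Metric.sphere (0:N) 1) :=
        (isCompact_sphere (0:N) 1).inter_left hKclosed
      obtain ⟨x0, hx0, hmin⟩ := hcpt.exists_isMinOn hS hℓcont.continuousOn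
      have hx0ne : x0 ≠ 0 := by
        intro h
        have := hx0.2
        simp [h] at this
      refine ⟨ℓ x0, hℓ x0 hx0.1 hx0ne, ?_⟩
      intro x hx
      rcases eq_or_ne x 0 with h | h
      · simp [h]
      · have hxn : (0:ℝ) < ‖x‖ := norm_pos_iff.2 h
        have hmem : ‖x‖⁻¹ • x ∈ K ∩ Metric.sphere (0:N) 1 := by
          refine ⟨hKcone x hx _ (by positivity), ?_⟩
          simp [norm_smul, abs_of_pos (inv_pos.2 hxn), inv_mul_cancel₀ hxn.ne']
        have h1 : ℓ x0 ≤ ‖x‖⁻¹ * ℓ x := by simpa using hmin hmem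
        calc ℓ x0 * ‖x‖ ≤ (‖x‖⁻¹ * ℓ x) * ‖x‖ := by nlinarith
          _ = ℓ x := by field_simp
    · refine ⟨1, one_pos, fun x hx => ?_⟩
      rcases eq_or_ne x 0 with h | h
      · simp [h]
      · exfalso
        have hxn : (0:ℝ) < ‖x‖ := norm_pos_iff.2 h
        exact hS ⟨‖x‖⁻¹ • x, hKcone x hx _ (by positivity),
          by simp [norm_smul, abs_of_pos (inv_pos.2 hxn), inv_mul_cancel₀ hxn.ne']⟩
  have hanti : Antitone A := antitone_nat_of_succ_le hAmono
  -- extract decompositions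
  have hv' : ∀ n : ℕ, ∃ x ∈ A (n + 1), ∃ y ∈ B, x + y = v := fun n => hv (n + 1)
  choose a ha b hb hab using hv'
  have haK : ∀ n, a n ∈ K := fun n =>
    hKsub (Set.mem_union_left _ (hanti (by omega : 1 ≤ n + 1) (ha n)))
  have hbK : ∀ n, b n ∈ K := fun n =>
    hKsub (Set.mem_union_right _ (subset_closure (hb n)))
  have hℓa : ∀ n, ℓ (a n) ≤ ℓ v := by
    intro n
    have : ℓ (a n) + ℓ (b n) = ℓ v := by rw [← map_add, hab n]
    have := hℓ0 _ (hbK n)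
    linarith [hℓ0 (b n) (hbK n), this]
  have hball : ∀ n, a n ∈ Metric.closedBall (0:N) (ℓ v / m) := by
    intro n
    rw [Metric.mem_closedBall, dist_zero_right]
    have h1 := hmK (a n) (haK n)
    have h2 := hℓa n
    rw [le_div_iff₀ hm]
    nlinarith
  obtain ⟨l, -, φ, hφmono, hφ⟩ :=
    (isCompact_closedBall (0:N) (ℓ v / m)).tendsto_subseq hball
  have hlA : l ∈ ⋂ n, A n := by
    rw [Set.mem_iInter]
    intro n
    refine (hAclosed n).mem_of_tendsto hφ ?_
    filter_upwards [Filter.eventually_ge_atTop n] with k hk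
    have hk2 : k ≤ φ k := hφmono.le_apply
    exact hanti (by omega : n ≤ φ k + 1) (ha (φ k))
  have hbl : v - l ∈ closure B := by
    have htend : Filter.Tendsto (fun k => b (φ k)) Filter.atTop (nhds (v - l)) := by
      have heq : (fun k => b (φ k)) = fun k => v - (a ∘ φ) k := by
        funext k
        exact eq_sub_of_add_eq' (hab (φ k))
      rw [heq]
      exact tendsto_const_nhds.sub hφ
    exact mem_closure_of_tendsto htend (Filter.Eventually.of_forall fun k => hb (φ k))
  exact ⟨l, hlA, v - l, hbl, by show l + (v - l) = v; abel⟩
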